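/- Let Δ ⊂ ℝⁿ be a simple polytope and H a nonzero linear functional. Then Δ has at least two H-asymmetric facets. -/

import Mathlib

open MeasureTheory Function Set

noncomputable section

namespace MassLinearPaper

def dotp {n : ℕ} (v x : Fin n → ℝ) : ℝ := ∑ j, v j * x j

def polytope {n N : ℕ} (η : Fin N → Fin n → ℝ) (κ : Fin N → ℝ) : Set (Fin n → ℝ) :=
  {x | ∀ i, dotp (η i) x ≤ κ i}

def facet {n N : ℕ} (η : Fin N → Fin n → ℝ) (κ : Fin N → ℝ) (i : Fin N) : Set (Fin n → ℝ) :=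
  {x ∈ polytope η κ | dotp (η i) x = κ i}

/-- A polytope is simple if at each point the active conormals are linearly independent. -/
def IsSimplePoly {n N : ℕ} (η : Fin N → Fin n → ℝ) (κ : Fin N → ℝ) : Prop :=
  ∀ x ∈ polytope η κ,
    LinearIndependent ℝ (fun i : {i : Fin N // dotp (η i) x = κ i} => η i.1)

/-- Two support vectors give analogous polytopes: the same collections of facets intersect. -/
def Analogous {n N : ℕ} (η : Fin N → Fin n → ℝ) (κ κ' : Fin N → ℝ) : Prop :=
  ∀ I : Finset (Fin N),
    (⋂ i ∈ I, facet η κ' i).Nonempty ↔ (⋂ i ∈ I, facet η κ i).Nonempty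

/-- The chamber of Δ(κ). -/
def chamber {n N : ℕ} (η : Fin N → Fin n → ℝ) (κ : Fin N → ℝ) : Set (Fin N → ℝ) :=
  connectedComponentIn {κ' | IsSimplePoly η κ' ∧ Analogous η κ κ'} κ

/-- Standing hypotheses: simple, bounded, nonempty interior, all facets nonempty. -/
def GoodPolytope {n N : ℕ} (η : Fin N → Fin n → ℝ) (κ : Fin N → ℝ) : Prop :=
  IsSimplePoly η κ ∧ Bornology.IsBounded (polytope η κ) ∧
    (interior (polytope η κ)).Nonempty ∧ ∀ i, (facet η κ i).Nonempty

/-- The center of mass of Δ(κ). -/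
def centroid {n N : ℕ} (η : Fin N → Fin n → ℝ) (κ : Fin N → ℝ) : Fin n → ℝ :=
  ⨍ x in polytope η κ, x

/-- The volume of Δ(κ) as a function of κ. -/
def volFn {n N : ℕ} (η : Fin N → Fin n → ℝ) : (Fin N → ℝ) → ℝ :=
  fun κ => (volume (polytope η κ)).toReal

/-- Partial derivative with respect to the i-th support number. -/
def pd {N : ℕ} (i : Fin N) (f : (Fin N → ℝ) → ℝ) : (Fin N → ℝ) → ℝ :=
  fun κ => fderiv ℝ f κ (Pi.single i 1)

def face {n N : ℕ} (η : Fin N → Fin n → ℝ) (κ : Fin N → ℝ) (S : Finset (Fin N)) :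
    Set (Fin n → ℝ) :=
  ⋂ i ∈ S, facet η κ i

/-- Centroid of a face with respect to Hausdorff measure of the appropriate dimension. -/
def faceCentroid {n N : ℕ} (η : Fin N → Fin n → ℝ) (κ : Fin N → ℝ) (S : Finset (Fin N)) :
    Fin n → ℝ :=
  ⨍ x in face η κ S, x ∂(μH[(n : ℝ) - S.card])

/-- The facet `F i` is H-symmetric: `⟨H, c(κ)⟩` does not depend on `κ i` on the chamber. -/
def SymmFacet {n N : ℕ} (η : Fin N → Fin n → ℝ) (κ : Fin N → ℝ) (H : Fin n → ℝ)
    (i : Fin N) : Prop :=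
  ∀ κ₁ ∈ chamber η κ, ∀ κ₂ ∈ chamber η κ, (∀ j, j ≠ i → κ₁ j = κ₂ j) →
    dotp H (centroid η κ₁) = dotp H (centroid η κ₂)

/-- H is mass linear with coefficients γ and constant C. -/
def MassLinear {n N : ℕ} (η : Fin N → Fin n → ℝ) (κ : Fin N → ℝ) (H : Fin n → ℝ)
    (γ : Fin N → ℝ) (C : ℝ) : Prop :=
  ∀ κ' ∈ chamber η κ, dotp H (centroid η κ') = ∑ i, γ i * κ' i + C

/-- A facet is pervasive if it meets every other facet. -/
def Pervasive {n N : ℕ} (η : Fin N → Fin n → ℝ) (κ : Fin N → ℝ) (i : Fin N) : Prop :=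
  ∀ j, j ≠ i → (facet η κ i ∩ facet η κ j).Nonempty

/-- A facet is flat if the conormals of all other facets meeting it lie in a hyperplane. -/
def FlatFacet {n N : ℕ} (η : Fin N → Fin n → ℝ) (κ : Fin N → ℝ) (i : Fin N) : Prop :=
  ∃ ξ : Fin n → ℝ, ξ ≠ 0 ∧
    ∀ j, j ≠ i → (facet η κ i ∩ facet η κ j).Nonempty → dotp (η j) ξ = 0

/-- Equivalence of facets, via the criterion of Lemma 4.4. -/
def FacetEquiv {n N : ℕ} (η : Fin N → Fin n → ℝ) (i j : Fin N) : Prop :=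
  i = j ∨ ∃ ξ : Fin n → ℝ, dotp (η i) ξ = 1 ∧ dotp (η j) ξ = -1 ∧
    ∀ k, k ≠ i → k ≠ j → dotp (η k) ξ = 0

def IsEquivClass {n N : ℕ} (η : Fin N → Fin n → ℝ) (I : Finset (Fin N)) : Prop :=
  I.Nonempty ∧ (∀ i ∈ I, ∀ j ∈ I, FacetEquiv η i j) ∧
    ∀ i ∈ I, ∀ j, FacetEquiv η i j → j ∈ I

/-- H is inessential. -/
def Inessential {n N : ℕ} (η : Fin N → Fin n → ℝ) (H : Fin n → ℝ) : Prop :=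
  ∃ β : Fin N → ℝ, H = ∑ i, β i • η i ∧
    ∀ I : Finset (Fin N), IsEquivClass η I → ∑ i ∈ I, β i = 0


/-!
Suppose every facet other than `F i₀` is `H`-symmetric. Simplicity and the combinatorics of
`Δ(κ)` survive small perturbations of `κ`, so the chamber contains a box around `κ`, and on that
box `κ' ↦ ⟨H, c(κ')⟩` depends only on `κ' i₀`. The homothetic copies `t Δ(κ) + v` (`t > 0`)
have support numbers `t κ + ⟨η, v⟩` and centroid `t c + v`; hence the linear form
`(t, v) ↦ t ⟨H, c⟩ + ⟨H, v⟩` vanishes on the kernel of `(t, v) ↦ t κ i₀ + ⟨η i₀, v⟩` and is a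
multiple `a` of it. The `v`-parts give `H = a η i₀`, so `a ≠ 0`, and then the `t`-parts give
`⟨η i₀, c⟩ = κ i₀`: the centroid would lie on the facet `F i₀`, which is absurd for a polytope
with interior. Applied to any `i₀` this yields an asymmetric facet, and applied to an asymmetric
`F i₀` a second one.
-/

open Matrix Filter Topology
open scoped ENNReal

section Average

variable {α β E : Type*} [MeasurableSpace α] [MeasurableSpace β]
  [NormedAddCommGroup E] [NormedSpace ℝ E]

theorem average_smul_measure (μ : Measure α) {c : ℝ≥0∞} (hc₀ : c ≠ 0) (hc : c ≠ ∞)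
    (f : α → E) : ⨍ x, f x ∂(c • μ) = ⨍ x, f x ∂μ := by
  rw [average_eq', average_eq', Measure.smul_apply, smul_smul, smul_eq_mul,
    ENNReal.mul_inv (.inl hc₀) (.inl hc), mul_comm c⁻¹, mul_assoc, ENNReal.inv_mul_cancel hc₀ hc,
    mul_one]

theorem _root_.MeasurableEmbedding.average_map {μ : Measure α} {T : α → β}
    (hT : MeasurableEmbedding T) (f : β → E) : ⨍ y, f y ∂(μ.map T) = ⨍ x, f (T x) ∂μ := by
  rw [average_eq, average_eq, hT.integral_map, measureReal_def, measureReal_def,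
    Measure.map_apply hT.measurable MeasurableSet.univ, preimage_univ]

theorem setAverage_preimage_of_map_eq_smul {μ : Measure α} {ν : Measure β} {T : α → β}
    (hT : MeasurableEmbedding T) {c : ℝ≥0∞} (hc₀ : c ≠ 0) (hc : c ≠ ∞) (hmap : μ.map T = c • ν)
    (f : β → E) (s : Set β) : ⨍ x in T ⁻¹' s, f (T x) ∂μ = ⨍ y in s, f y ∂ν := by
  rw [← average_smul_measure (ν.restrict s) hc₀ hc, ← Measure.restrict_smul, ← hmap,
    hT.restrict_map, hT.average_map]

theorem setAverage_smul_add [CompleteSpace E] {μ : Measure α} {s : Set α} (hs₀ : μ s ≠ 0)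
    (hs : μ s ≠ ∞) {f : α → E} (hf : IntegrableOn f s μ) (t : ℝ) (v : E) :
    ⨍ x in s, (t • f x + v) ∂μ = t • ⨍ x in s, f x ∂μ + v := by
  have hμs : μ.real s ≠ 0 := ENNReal.toReal_ne_zero.2 ⟨hs₀, hs⟩
  rw [setAverage_eq, setAverage_eq,
    integral_add (f := fun x => t • f x) (hf.smul t) (integrableOn_const hs), integral_smul,
    setIntegral_const, smul_add, smul_comm, inv_smul_smul₀ hμs]

end Average

section Homothety

variable {E : Type*} [NormedAddCommGroup E] [NormedSpace ℝ E] [FiniteDimensional ℝ E]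
  [MeasurableSpace E] [BorelSpace E] (μ : Measure E) [μ.IsAddHaarMeasure]

theorem map_smul_sub_addHaar {t : ℝ} (ht : t ≠ 0) (v : E) :
    μ.map (fun y => t • (y - v)) = ENNReal.ofReal |(t ^ Module.finrank ℝ E)⁻¹| • μ := by
  have : (fun y : E => t • (y - v)) = (t • ·) ∘ (· - v) := rfl
  rw [this, ← Measure.map_map (measurable_const_smul t) (measurable_sub_const v),
    map_sub_right_eq_self, Measure.map_addHaar_smul μ ht]

theorem setAverage_homothety {s : Set E} (hs₀ : μ s ≠ 0) (hs : μ s ≠ ∞)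
    (hint : IntegrableOn id s μ) {t : ℝ} (ht : t ≠ 0) (v : E) :
    ⨍ y in (fun y => t⁻¹ • (y - v)) ⁻¹' s, y ∂μ = t • ⨍ x in s, x ∂μ + v := by
  have hT : MeasurableEmbedding (fun y : E => t⁻¹ • (y - v)) :=
    ((Homeomorph.subRight v).trans
      (Homeomorph.smulOfNeZero t⁻¹ (inv_ne_zero ht))).measurableEmbedding
  have hc : ENNReal.ofReal |((t⁻¹) ^ Module.finrank ℝ E)⁻¹| ≠ 0 := by
    simp [ht]
  calc ⨍ y in (fun y => t⁻¹ • (y - v)) ⁻¹' s, y ∂μ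
      = ⨍ y in (fun y => t⁻¹ • (y - v)) ⁻¹' s, (t • (t⁻¹ • (y - v)) + v) ∂μ := by
        simp [smul_smul, ht]
    _ = ⨍ x in s, (t • x + v) ∂μ :=
        setAverage_preimage_of_map_eq_smul hT hc ENNReal.ofReal_ne_top
          (map_smul_sub_addHaar μ (inv_ne_zero ht) v) (fun x => t • x + v) s
    _ = t • ⨍ x in s, x ∂μ + v := setAverage_smul_add hs₀ hs hint t v

end Homothety

theorem _root_.Matrix.mulVec_surjective_of_linearIndependent_row {m k K : Type*} [Field K]
    [Fintype m] [Fintype k] {M : Matrix m k K} (h : LinearIndependent K M.row) :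
    Function.Surjective M.mulVec := by
  have : LinearMap.range M.mulVecLin = ⊤ := Submodule.eq_top_of_finrank_eq <| by
    rw [← Matrix.rank, h.rank_matrix, Module.finrank_fintype_fun_eq_card]
  exact LinearMap.range_eq_top.1 this

theorem eq_of_apply_eq_of_mem_pi {ι α β : Type*} [Fintype ι] [DecidableEq ι] {t : ι → Set α}
    {f : (ι → α) → β} {i₀ : ι}
    (hf : ∀ j ≠ i₀, ∀ x ∈ univ.pi t, ∀ y ∈ univ.pi t, (∀ k ≠ j, x k = y k) → f x = f y)
    {x y : ι → α} (hx : x ∈ univ.pi t) (hy : y ∈ univ.pi t) (hxy : x i₀ = y i₀) : f x = f y := by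
  suffices ∀ S : Finset ι, i₀ ∉ S → ∀ x ∈ univ.pi t, (∀ k ∉ S, x k = y k) → f x = f y from
    this (Finset.univ.erase i₀) (Finset.notMem_erase i₀ _) x hx fun k hk => by
      obtain rfl : k = i₀ := by simpa using hk
      exact hxy
  intro S
  induction S using Finset.induction_on with
  | empty => exact fun _ x _ hxy => congrArg f (funext fun k => hxy k (Finset.notMem_empty k))
  | insert a S _ ih =>
    intro hi₀ x hx hxy
    rw [Finset.mem_insert, not_or] at hi₀
    have hx' : update x a (y a) ∈ univ.pi t := fun k _ => by
      by_cases hk : k = a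
      · subst hk; simpa using hy k trivial
      · simpa [hk] using hx k trivial
    calc f x = f (update x a (y a)) :=
          hf a (Ne.symm hi₀.1) x hx _ hx' fun k hk => (update_of_ne hk _ _).symm
      _ = f y := ih hi₀.2 _ hx' fun k hk => by
          by_cases hka : k = a
          · subst hka; simp
          · simpa [hka] using hxy k (by simp [hka, hk])

theorem exists_smul_eq_of_ker_le_ker {K E : Type*} [Field K] [AddCommGroup E] [Module K E]
    {L M : E →ₗ[K] K} (h : LinearMap.ker M ≤ LinearMap.ker L) : ∃ a : K, a • M = L :=
  Submodule.mem_span_singleton.1 <| by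
    simpa using mem_span_of_iInf_ker_le_ker (L := fun _ : Unit => M) (by simpa using h)

theorem ker_le_ker_of_eventually {W : Type*} [NormedAddCommGroup W] [NormedSpace ℝ W]
    {L M : W →ₗ[ℝ] ℝ} {w₀ : W} (h : ∀ᶠ w in 𝓝 w₀, M w = M w₀ → L w = L w₀) :
    LinearMap.ker M ≤ LinearMap.ker L := by
  intro w hw
  have hpath : Tendsto (fun s : ℝ => w₀ + s • w) (𝓝[≠] 0) (𝓝 w₀) :=
    ((continuous_const.add (continuous_id.smul continuous_const)).tendsto' 0 w₀
      (by simp)).mono_left nhdsWithin_le_nhds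
  obtain ⟨s, hs, hL⟩ := (eventually_mem_nhdsWithin.and (hpath.eventually h)).exists
  have hsL := hL (by simp [LinearMap.mem_ker.1 hw])
  simp only [map_add, map_smul, smul_eq_mul, add_eq_left, mul_eq_zero] at hsL
  exact hsL.resolve_left hs

section Polytope

variable {n N : ℕ} {η : Fin N → Fin n → ℝ} {κ : Fin N → ℝ} {H : Fin n → ℝ}

@[simp]
theorem dotp_eq_dotProduct (v x : Fin n → ℝ) : dotp v x = v ⬝ᵥ x := rfl

theorem mem_polytope {x : Fin n → ℝ} : x ∈ polytope η κ ↔ ∀ i, η i ⬝ᵥ x ≤ κ i := Iff.rfl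

theorem isClosed_polytope (η : Fin N → Fin n → ℝ) (κ : Fin N → ℝ) :
    IsClosed (polytope η κ) := by
  simp only [polytope, dotp, ofPred_forall]
  exact isClosed_iInter fun i => isClosed_le (by fun_prop) continuous_const

theorem isCompact_polytope (hbd : Bornology.IsBounded (polytope η κ)) :
    IsCompact (polytope η κ) :=
  Metric.isCompact_of_isClosed_isBounded (isClosed_polytope η κ) hbd

theorem polytope_smul_add (κ : Fin N → ℝ) {t : ℝ} (ht : 0 < t) (v : Fin n → ℝ) :
    polytope η (fun i => t * κ i + η i ⬝ᵥ v) = (fun y => t⁻¹ • (y - v)) ⁻¹' polytope η κ := by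
  ext y
  simp only [mem_preimage, mem_polytope, dotProduct_smul, dotProduct_sub, smul_eq_mul,
    inv_mul_le_iff₀ ht, sub_le_iff_le_add]

theorem centroid_smul_add (hbd : Bornology.IsBounded (polytope η κ))
    (hvol : volume (polytope η κ) ≠ 0) {t : ℝ} (ht : 0 < t) (v : Fin n → ℝ) :
    centroid η (fun i => t * κ i + η i ⬝ᵥ v) = t • centroid η κ + v := by
  rw [centroid, centroid, polytope_smul_add κ ht v]
  exact setAverage_homothety volume hvol (isCompact_polytope hbd).measure_lt_top.ne
    (continuousOn_id.integrableOn_compact (isCompact_polytope hbd)) ht.ne' v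

theorem ne_zero_of_isSimplePoly (hsimp : IsSimplePoly η κ) {i : Fin N}
    (hi : (facet η κ i).Nonempty) : η i ≠ 0 := by
  obtain ⟨x, hxΔ, hxi⟩ := hi
  exact (hsimp x hxΔ).ne_zero ⟨i, hxi⟩

theorem dotProduct_lt_of_mem_interior {i : Fin N} (hη : η i ≠ 0) {x : Fin n → ℝ}
    (hx : x ∈ interior (polytope η κ)) : η i ⬝ᵥ x < κ i := by
  have hpath : Tendsto (fun s : ℝ => x + s • η i) (𝓝[>] 0) (𝓝 x) :=
    ((continuous_const.add (continuous_id.smul continuous_const)).tendsto' 0 x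
      (by simp)).mono_left nhdsWithin_le_nhds
  obtain ⟨s, hs, hsΔ⟩ :=
    (eventually_mem_nhdsWithin.and (hpath.eventually (mem_interior_iff_mem_nhds.1 hx))).exists
  have hpos : 0 < η i ⬝ᵥ η i := by simpa using dotProduct_star_self_pos_iff.2 hη
  have := mem_polytope.1 hsΔ i
  rw [dotProduct_add, dotProduct_smul, smul_eq_mul] at this
  nlinarith [mul_pos (mem_Ioi.1 hs) hpos]

theorem isBounded_polytope_of_forall_lt (hbd : Bornology.IsBounded (polytope η κ))
    {x₀ : Fin n → ℝ} (hx₀ : ∀ i, η i ⬝ᵥ x₀ < κ i) (κ' : Fin N → ℝ) :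
    Bornology.IsBounded (polytope η κ') := by
  obtain ⟨r, hr, hrκ⟩ : ∃ r : ℝ, 0 < r ∧ ∀ i, r * (κ' i - η i ⬝ᵥ x₀) ≤ κ i - η i ⬝ᵥ x₀ := by
    refine (eventually_mem_nhdsWithin.and (eventually_all.2 fun i => ?_)).exists (f := 𝓝[>] (0 : ℝ))
    refine (((continuous_id.mul continuous_const).tendsto' 0 0 (by simp)).eventually
      (eventually_le_nhds (sub_pos.2 (hx₀ i)))).filter_mono nhdsWithin_le_nhds
  refine ((isCompact_polytope hbd).image (f := fun z => x₀ + r⁻¹ • (z - x₀))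
    (by fun_prop)).isBounded.subset fun y hy => ⟨x₀ + r • (y - x₀), mem_polytope.2 fun i => ?_, ?_⟩
  · rw [dotProduct_add, dotProduct_smul, dotProduct_sub, smul_eq_mul]
    nlinarith [hrκ i, mem_polytope.1 hy i]
  · simp [smul_smul, hr.ne']

theorem dotProduct_centroid_lt (hbd : Bornology.IsBounded (polytope η κ))
    (hint : (interior (polytope η κ)).Nonempty) {i : Fin N} (hη : η i ≠ 0) :
    η i ⬝ᵥ centroid η κ < κ i := by
  set Δ := polytope η κ
  have hΔ : IsCompact Δ := isCompact_polytope hbd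
  have hvol : 0 < volume.real Δ :=
    ENNReal.toReal_pos (Measure.measure_pos_of_nonempty_interior volume hint).ne'
      hΔ.measure_lt_top.ne
  have hdot : IntegrableOn (fun x => η i ⬝ᵥ x) Δ volume :=
    (continuous_const.dotProduct continuous_id).continuousOn.integrableOn_compact hΔ
  have hgap : 0 < ∫ x in Δ, (κ i - η i ⬝ᵥ x) := by
    refine (setIntegral_pos_iff_support_of_nonneg_ae ?_
      ((integrableOn_const hΔ.measure_lt_top.ne).sub hdot)).2 ?_
    · exact (ae_restrict_mem (isClosed_polytope η κ).measurableSet).mono fun x hx =>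
        sub_nonneg.2 (mem_polytope.1 hx i)
    · exact (isOpen_interior.measure_pos volume hint).trans_le (measure_mono fun x hx =>
        ⟨(sub_pos.2 (dotProduct_lt_of_mem_interior hη hx)).ne', interior_subset hx⟩)
  let φ : (Fin n → ℝ) →L[ℝ] ℝ := LinearMap.toContinuousLinearMap (dotProductBilin ℝ ℝ (η i))
  have hcomm : η i ⬝ᵥ centroid η κ = (volume.real Δ)⁻¹ * ∫ x in Δ, η i ⬝ᵥ x := by
    rw [centroid, setAverage_eq]
    change φ ((volume.real Δ)⁻¹ • ∫ x in Δ, id x) = _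
    rw [φ.map_smul, ← φ.integral_comp_comm (continuousOn_id.integrableOn_compact hΔ)]
    rfl
  rw [integral_sub (integrableOn_const (C := κ i) hΔ.measure_lt_top.ne) hdot, setIntegral_const,
    smul_eq_mul] at hgap
  rw [hcomm, inv_mul_lt_iff₀ hvol]
  linarith

theorem mem_face {S : Finset (Fin N)} {x : Fin n → ℝ} :
    x ∈ face η κ S ↔ ∀ i ∈ S, x ∈ polytope η κ ∧ η i ⬝ᵥ x = κ i := by
  simp [face, facet, dotp_eq_dotProduct]

theorem IsSimplePoly.of_analogous {κ' : Fin N → ℝ} (hsimp : IsSimplePoly η κ)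
    (h : Analogous η κ κ') : IsSimplePoly η κ' := by
  classical
  intro x hx
  rcases isEmpty_or_nonempty {i : Fin N // dotp (η i) x = κ' i} with hE | ⟨⟨i₁, hi₁⟩⟩
  · exact linearIndependent_empty_type
  set T := Finset.univ.filter fun i => η i ⬝ᵥ x = κ' i
  obtain ⟨y, hy⟩ := (h T).1 ⟨x, mem_face.2 fun i hi => ⟨hx, (Finset.mem_filter.1 hi).2⟩⟩
  have hyT : ∀ i ∈ T, y ∈ polytope η κ ∧ η i ⬝ᵥ y = κ i := mem_face.1 hy
  let e := Subtype.impEmbedding _ _ fun i hi => (hyT i (by simpa [T] using hi)).2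
  exact (hsimp y (hyT i₁ (by simpa [T] using hi₁)).1).comp e e.injective

theorem eventually_face_nonempty (hsimp : IsSimplePoly η κ) {S : Finset (Fin N)}
    (hS : (face η κ S).Nonempty) : ∀ᶠ κ' in 𝓝 κ, (face η κ' S).Nonempty := by
  classical
  obtain ⟨x, hx⟩ := hS
  rcases S.eq_empty_or_nonempty with rfl | ⟨i₁, hi₁⟩
  · exact Eventually.of_forall fun κ' => by simp [face]
  let A := {i // η i ⬝ᵥ x = κ i}
  let M : Matrix A (Fin n) ℝ := .of fun a => η a
  obtain ⟨B, hB⟩ := mulVec_surjective_iff_exists_right_inverse.1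
    (Matrix.mulVec_surjective_of_linearIndependent_row (M := M) (hsimp x (mem_face.1 hx i₁ hi₁).1))
  -- `x' κ'` keeps every facet active at `x` active for the support numbers `κ'`.
  let x' : (Fin N → ℝ) → Fin n → ℝ := fun κ' => x + B *ᵥ fun a : A => κ' a - κ a
  have hactive : ∀ κ' i, η i ⬝ᵥ x = κ i → η i ⬝ᵥ x' κ' = κ' i := by
    intro κ' i hi
    have := congr_fun (show M *ᵥ (B *ᵥ fun a : A => κ' a - κ a) = fun a : A => κ' a - κ a by
      rw [mulVec_mulVec, hB, one_mulVec]) ⟨i, hi⟩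
    simp only [x', dotProduct_add, hi]
    change κ i + (M *ᵥ _) ⟨i, hi⟩ = _
    rw [this]; ring
  have hpoly : ∀ᶠ κ' in 𝓝 κ, ∀ i, η i ⬝ᵥ x' κ' ≤ κ' i := by
    refine eventually_all.2 fun i => ?_
    by_cases hi : η i ⬝ᵥ x = κ i
    · exact .of_forall fun κ' => (hactive κ' i hi).le
    have hcont : Continuous fun κ' => κ' i - η i ⬝ᵥ x' κ' := by fun_prop
    have hpos : 0 < κ i - η i ⬝ᵥ x' κ := by
      have hx' : x' κ = x := by simp [x', ← Pi.zero_def]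
      simpa [hx'] using lt_of_le_of_ne ((mem_face.1 hx i₁ hi₁).1 i) hi
    exact (hcont.tendsto κ |>.eventually (lt_mem_nhds hpos)).mono fun _ h => sub_pos.1 h |>.le
  filter_upwards [hpoly] with κ' hκ'
  exact ⟨x' κ', mem_face.2 fun i hi => ⟨hκ', hactive κ' i ((mem_face.1 hx i hi).2)⟩⟩

theorem isClosed_setOf_mem_face (η : Fin N → Fin n → ℝ) (S : Finset (Fin N)) :
    IsClosed {p : (Fin N → ℝ) × (Fin n → ℝ) | p.2 ∈ face η p.1 S} := by
  have : {p : (Fin N → ℝ) × (Fin n → ℝ) | p.2 ∈ face η p.1 S} =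
      ⋂ i ∈ S, ((⋂ j, {p | η j ⬝ᵥ p.2 ≤ p.1 j}) ∩ {p | η i ⬝ᵥ p.2 = p.1 i}) := by
    ext p
    simp [mem_face, mem_polytope]
  rw [this]
  exact isClosed_biInter fun i _ => (isClosed_iInter fun j => isClosed_le (by fun_prop)
    (by fun_prop)).inter (isClosed_eq (by fun_prop) (by fun_prop))

theorem eventually_face_eq_empty {K : Set (Fin n → ℝ)} (hK : IsCompact K)
    (hsub : ∀ᶠ κ' in 𝓝 κ, polytope η κ' ⊆ K) {S : Finset (Fin N)} (hS : face η κ S = ∅) :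
    ∀ᶠ κ' in 𝓝 κ, face η κ' S = ∅ := by
  rcases S.eq_empty_or_nonempty with rfl | ⟨i₁, hi₁⟩
  · simp [face] at hS
  have hfar : ∀ᶠ κ' in 𝓝 κ, ∀ x ∈ K, x ∉ face η κ' S :=
    hK.eventually_forall_of_forall_eventually fun x _ =>
      (isClosed_setOf_mem_face η S).isOpen_compl.mem_nhds (by simp [hS])
  filter_upwards [hfar, hsub] with κ' hfar hsub
  exact eq_empty_of_forall_notMem fun x hx => hfar x (hsub (mem_face.1 hx i₁ hi₁).1) hx

theorem eventually_analogous (hΔ : GoodPolytope η κ) : ∀ᶠ κ' in 𝓝 κ, Analogous η κ κ' := by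
  obtain ⟨hsimp, hbd, ⟨x₀, hx₀⟩, hfac⟩ := hΔ
  have hK : IsCompact (polytope η (κ + 1)) := isCompact_polytope <|
    isBounded_polytope_of_forall_lt hbd (fun i =>
      dotProduct_lt_of_mem_interior (ne_zero_of_isSimplePoly hsimp (hfac i)) hx₀) _
  have hsub : ∀ᶠ κ' in 𝓝 κ, polytope η κ' ⊆ polytope η (κ + 1) :=
    (eventually_all.2 fun i => ((continuous_apply i).tendsto κ).eventually
      (eventually_le_nhds (lt_add_one (κ i)))).mono fun _ h _ hx i => (hx i).trans (h i)
  refine eventually_all.2 fun S => ?_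
  rcases (face η κ S).eq_empty_or_nonempty with hS | hS
  · exact (eventually_face_eq_empty hK hsub hS).mono fun κ' h => by
      change (face η κ' S).Nonempty ↔ (face η κ S).Nonempty
      rw [h, hS]
  · exact (eventually_face_nonempty hsimp hS).mono fun κ' h => iff_of_true h hS

theorem chamber_mem_nhds (hΔ : GoodPolytope η κ) : chamber η κ ∈ 𝓝 κ :=
  connectedComponentIn_mem_nhds
    ((eventually_analogous hΔ).mono fun _ h => ⟨hΔ.1.of_analogous h, h⟩)

theorem eventually_dotProduct_centroid_eq (hΔ : GoodPolytope η κ) {i₀ : Fin N}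
    (hsym : ∀ j ≠ i₀, SymmFacet η κ H j) :
    ∀ᶠ κ' in 𝓝 κ, κ' i₀ = κ i₀ → H ⬝ᵥ centroid η κ' = H ⬝ᵥ centroid η κ := by
  classical
  obtain ⟨ε, hε, hball⟩ := Metric.nhds_basis_closedBall.mem_iff.1 (chamber_mem_nhds hΔ)
  filter_upwards [Metric.closedBall_mem_nhds κ hε] with κ' hκ' h
  rw [closedBall_pi _ hε.le] at hball hκ'
  exact eq_of_apply_eq_of_mem_pi (fun j hj κ₁ h₁ κ₂ h₂ => hsym j hj κ₁ (hball h₁) κ₂ (hball h₂))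
    hκ' (fun i _ => Metric.mem_closedBall_self hε.le) h

theorem not_forall_ne_symmFacet (hΔ : GoodPolytope η κ) (hH : H ≠ 0) (i₀ : Fin N) :
    ¬ ∀ j ≠ i₀, SymmFacet η κ H j := by
  intro hsym
  set c := centroid η κ
  have hvol : volume (polytope η κ) ≠ 0 :=
    (Measure.measure_pos_of_nonempty_interior volume hΔ.2.2.1).ne'
  -- `Ψ (t, v)` are the support numbers of `t • Δ(κ) + v`, whose centroid is `t • c + v`.
  let Ψ : ℝ × (Fin n → ℝ) →ₗ[ℝ] Fin N → ℝ :=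
    (LinearMap.fst ℝ ℝ _).smulRight κ + (Matrix.of η).mulVecLin ∘ₗ LinearMap.snd ℝ ℝ _
  let L : ℝ × (Fin n → ℝ) →ₗ[ℝ] ℝ :=
    (H ⬝ᵥ c) • LinearMap.fst ℝ ℝ _ + dotProductBilin ℝ ℝ H ∘ₗ LinearMap.snd ℝ ℝ _
  let M : ℝ × (Fin n → ℝ) →ₗ[ℝ] ℝ := LinearMap.proj i₀ ∘ₗ Ψ
  have hloc : ∀ᶠ p in 𝓝 ((1 : ℝ), (0 : Fin n → ℝ)), M p = M (1, 0) → L p = L (1, 0) := by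
    have hΨ : Tendsto Ψ (𝓝 (1, 0)) (𝓝 κ) :=
      Ψ.continuous_of_finiteDimensional.tendsto' _ _ (by ext; simp [Ψ])
    filter_upwards [hΨ.eventually (eventually_dotProduct_centroid_eq hΔ hsym),
      (continuous_fst.tendsto _).eventually (lt_mem_nhds one_pos)] with p hp hp₁ hM
    have hΨp : Ψ p = fun i => p.1 * κ i + η i ⬝ᵥ p.2 := by ext; simp [Ψ, mulVec]
    have := hp (by simpa [M, Ψ, mulVec] using hM)
    rw [hΨp, centroid_smul_add hΔ.2.1 hvol hp₁, dotProduct_add, dotProduct_smul] at this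
    simpa [L, mul_comm] using this
  obtain ⟨a, ha⟩ := exists_smul_eq_of_ker_le_ker (ker_le_ker_of_eventually hloc)
  have hHa : ∀ v, H ⬝ᵥ v = a * η i₀ ⬝ᵥ v := fun v => by
    simpa [L, M, Ψ, mulVec] using (LinearMap.congr_fun ha (0, v)).symm
  have hc : H ⬝ᵥ c = a * κ i₀ := by simpa [L, M, Ψ] using (LinearMap.congr_fun ha (1, 0)).symm
  have ha0 : a ≠ 0 := by
    rintro rfl
    exact hH (dotProduct_self_eq_zero.1 (by simpa using hHa H))
  rw [hHa] at hc
  exact (dotProduct_centroid_lt hΔ.2.1 hΔ.2.2.1 (ne_zero_of_isSimplePoly hΔ.1 (hΔ.2.2.2 i₀))).ne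
    (mul_left_cancel₀ ha0 hc)

end Polytope

end MassLinearPaper

open MassLinearPaper

/-- A nonzero linear functional has at least two asymmetric facets. -/
theorem stmt7 {n N : ℕ} (η : Fin N → Fin n → ℝ) (κ : Fin N → ℝ) (H : Fin n → ℝ)
    (hΔ : GoodPolytope η κ) (hH : H ≠ 0) :
    ∃ i j : Fin N, i ≠ j ∧ ¬ SymmFacet η κ H i ∧ ¬ SymmFacet η κ H j := by
  have : Nonempty (Fin N) := by
    by_contra hN
    rw [not_nonempty_iff] at hN
    have := nontrivial_of_ne H 0 hH
    exact NormedSpace.unbounded_univ ℝ (Fin n → ℝ) (by simpa [polytope] using hΔ.2.1)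
  obtain ⟨i, hi⟩ : ∃ i, ¬ SymmFacet η κ H i := by
    by_contra! h
    exact not_forall_ne_symmFacet hΔ hH (Classical.arbitrary _) fun j _ => h j
  obtain ⟨j, hji, hj⟩ : ∃ j ≠ i, ¬ SymmFacet η κ H j := by
    simpa using not_forall_ne_symmFacet hΔ hH i
  exact ⟨i, j, hji.symm, hi, hj⟩
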